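/- Let n ≥ 2 and B ≥ 1 be integers. Let q : Fin B → ℝ be real numbers (the bootstrap OOB scores), let q̄ = (1/B)·Σ_b q_b and V_B = (1/B)·Σ_b (q_b − q̄)². Let u, v : Fin B → ℝ be real weight sequences (the bootstrap counts of data point i and data point j), let ψ_i, ψ_j, h be real numbers (the Data-OOB values of points i and j and the overall OOB estimate), and define the infinitesimal jackknife influence values by ψIJ_i = (2 + 1/(n−1))·(ψ_i − h)/n + (1 − 1/n)^{−n}·(1/B)·Σ_b (u_b − 1)·q_b and ψIJ_j = (2 + 1/(n−1))·(ψ_j − h)/n + (1 − 1/n)^{−n}·(1/B)·Σ_b (v_b − 1)·q_b. Assume Σ_b (u_b − v_b) = 0 and (1/B)·Σ_b (u_b − v_b)² ≤ 2 − 4/n. Then ψIJ_i > ψIJ_j + 4·√2·√V_B implies ψ_i > ψ_j. -/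

import Mathlib

/-!
The difference `ψIJ_i - ψIJ_j` is the positive multiple `(2 + 1/(n-1))/n` of `ψ_i - ψ_j`
plus `(1 - 1/n)^(-n)` times the empirical covariance of `u - v` with `q`. Because
`Σ_b (u_b - v_b) = 0` that covariance may be centred at any constant, so Cauchy–Schwarz bounds it
by `√2 · √V_B`, while Bernoulli's inequality `(1 - 1/n)^(n/2) ≥ 1/2` gives `(1 - 1/n)^(-n) ≤ 4`.
The assumed gap therefore leaves `ψ_i - ψ_j > 0`.
-/

open Finset

lemma one_sub_one_div_zpow_neg_le_four {n : ℕ} (hn : 2 ≤ n) :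
    (1 - 1 / (n : ℝ)) ^ (-(n : ℤ)) ≤ 4 := by
  have hn' : (2 : ℝ) ≤ n := by exact_mod_cast hn
  have hbase : 0 ≤ 1 - 1 / (n : ℝ) := by
    rw [sub_nonneg, div_le_one (by linarith)]; linarith
  have hhalf : 1 / 2 ≤ (1 - 1 / (n : ℝ)) ^ ((n : ℝ) / 2) := by
    have hs : -1 ≤ -(1 / (n : ℝ)) := by
      rw [neg_le_neg_iff, div_le_one (by linarith)]; linarith
    have bernoulli := one_add_mul_self_le_rpow_one_add hs (p := (n : ℝ) / 2) (by linarith)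
    rw [← sub_eq_add_neg] at bernoulli
    field_simp at bernoulli ⊢
    linarith
  have hquarter : 1 / 4 ≤ (1 - 1 / (n : ℝ)) ^ n := by
    have hsq : (1 - 1 / (n : ℝ)) ^ n = ((1 - 1 / (n : ℝ)) ^ ((n : ℝ) / 2)) ^ 2 := by
      rw [← Real.rpow_mul_natCast hbase, ← Real.rpow_natCast]
      congr 1; push_cast; ring
    rw [hsq]
    nlinarith
  rw [zpow_neg, zpow_natCast, inv_le_comm₀ (by linarith) (by norm_num)]
  linarith

lemma mul_sum_mul_le_sqrt_mul_sqrt_of_sum_eq_zero {ι : Type*} (s : Finset ι) (w q : ι → ℝ)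
    {c : ℝ} (hc : 0 ≤ c) (qbar : ℝ) (hw : ∑ i ∈ s, w i = 0) :
    c * ∑ i ∈ s, w i * q i ≤ √(c * ∑ i ∈ s, w i ^ 2) * √(c * ∑ i ∈ s, (q i - qbar) ^ 2) := by
  have hcentre : ∑ i ∈ s, w i * q i = ∑ i ∈ s, w i * (q i - qbar) := by
    simp only [mul_sub, sum_sub_distrib, ← sum_mul, hw, zero_mul, sub_zero]
  rw [hcentre, Real.sqrt_mul hc, Real.sqrt_mul hc,
    mul_mul_mul_comm, Real.mul_self_sqrt hc]
  exact mul_le_mul_of_nonneg_left (Real.sum_mul_le_sqrt_mul_sqrt s w _) hc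

theorem dataOOB_order_consistency_general (n B : ℕ) (hn : 2 ≤ n)
    (q u v : Fin B → ℝ) (ψi ψj h : ℝ)
    (qbar VB ψIJi ψIJj : ℝ)
    (hVB : VB = (1 / (B : ℝ)) * ∑ b, (q b - qbar) ^ 2)
    (hψIJi : ψIJi = (2 + 1 / ((n : ℝ) - 1)) * (ψi - h) / n +
      (1 - 1 / (n : ℝ)) ^ (-(n : ℤ)) * ((1 / (B : ℝ)) * ∑ b, (u b - 1) * q b))
    (hψIJj : ψIJj = (2 + 1 / ((n : ℝ) - 1)) * (ψj - h) / n +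
      (1 - 1 / (n : ℝ)) ^ (-(n : ℤ)) * ((1 / (B : ℝ)) * ∑ b, (v b - 1) * q b))
    (hsum : ∑ b, (u b - v b) = 0)
    (hmoment : (1 / (B : ℝ)) * ∑ b, (u b - v b) ^ 2 ≤ 2 - 4 / (n : ℝ))
    (hgap : ψIJi > ψIJj + 4 * Real.sqrt 2 * Real.sqrt VB) :
    ψi > ψj := by
  have hn' : (2 : ℝ) ≤ n := by exact_mod_cast hn
  set a := (1 - 1 / (n : ℝ)) ^ (-(n : ℤ))
  set cov := (1 / (B : ℝ)) * ∑ b, (u b - v b) * q b with hcov_def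
  have hdiff : ψIJi - ψIJj = (2 + 1 / ((n : ℝ) - 1)) * (ψi - ψj) / n + a * cov := by
    have : ∑ b, (u b - v b) * q b = ∑ b, (u b - 1) * q b - ∑ b, (v b - 1) * q b := by
      rw [← sum_sub_distrib]; exact sum_congr rfl fun b _ ↦ by ring
    rw [hψIJi, hψIJj, hcov_def, this]; ring
  have hcov : cov ≤ √2 * √VB := by
    refine (mul_sum_mul_le_sqrt_mul_sqrt_of_sum_eq_zero _ _ q (by positivity) qbar hsum).trans ?_
    rw [← hVB]
    gcongr
    linarith [show 0 ≤ 4 / (n : ℝ) by positivity]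
  have ha : 0 < a := zpow_pos (by rw [sub_pos, div_lt_one (by linarith)]; linarith) _
  have hacov : a * cov ≤ 4 * √2 * √VB := by
    calc a * cov ≤ a * (√2 * √VB) := by gcongr
      _ ≤ 4 * (√2 * √VB) := by gcongr; exact one_sub_one_div_zpow_neg_le_four hn
      _ = 4 * √2 * √VB := by ring
  have hpos : 0 < (2 + 1 / ((n : ℝ) - 1)) * (ψi - ψj) / n := by linarith
  have hK : 0 < (2 + 1 / ((n : ℝ) - 1)) / n := by
    have : 0 < (n : ℝ) - 1 := by linarith
    positivity
  rw [mul_div_right_comm] at hpos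
  exact sub_pos.mp (pos_of_mul_pos_right hpos hK.le)

/-- Deterministic core of Proposition 1 (order consistency between Data-OOB and the
infinitesimal jackknife influence function). Given bootstrap OOB scores `q` with mean
`q̄` and empirical variance `V_B`, weight sequences `u, v` (bootstrap counts of two data
points) satisfying `Σ_b (u_b − v_b) = 0` and `(1/B)·Σ_b (u_b − v_b)² ≤ 2 − 4/n`, and the
infinitesimal jackknife influence values `ψIJ_i, ψIJ_j` defined from the Data-OOB values
`ψ_i, ψ_j` and the OOB estimate `h`, the strict gap
`ψIJ_i > ψIJ_j + 4·√2·√V_B` implies `ψ_i > ψ_j`. -/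
theorem dataOOB_order_consistency (n B : ℕ) (hn : 2 ≤ n) (hB : 1 ≤ B)
    (q u v : Fin B → ℝ) (ψi ψj h : ℝ)
    (qbar VB ψIJi ψIJj : ℝ)
    (hqbar : qbar = (1 / (B : ℝ)) * ∑ b, q b)
    (hVB : VB = (1 / (B : ℝ)) * ∑ b, (q b - qbar) ^ 2)
    (hψIJi : ψIJi = (2 + 1 / ((n : ℝ) - 1)) * (ψi - h) / n +
      (1 - 1 / (n : ℝ)) ^ (-(n : ℤ)) * ((1 / (B : ℝ)) * ∑ b, (u b - 1) * q b))
    (hψIJj : ψIJj = (2 + 1 / ((n : ℝ) - 1)) * (ψj - h) / n +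
      (1 - 1 / (n : ℝ)) ^ (-(n : ℤ)) * ((1 / (B : ℝ)) * ∑ b, (v b - 1) * q b))
    (hsum : ∑ b, (u b - v b) = 0)
    (hmoment : (1 / (B : ℝ)) * ∑ b, (u b - v b) ^ 2 ≤ 2 - 4 / (n : ℝ))
    (hgap : ψIJi > ψIJj + 4 * Real.sqrt 2 * Real.sqrt VB) :
    ψi > ψj :=
  dataOOB_order_consistency_general n B hn q u v ψi ψj h qbar VB ψIJi ψIJj hVB hψIJi hψIJj hsum
    hmoment hgap
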